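/- arXiv:2004.05283 — 3 statements merged into one kernel-verified Lean document; each statement's English description precedes it below -/
import Mathlib

section
/- A partition λ has at least r distinct row lengths if and only if λ can be written as μ +_V (ν +_H ϱ_r) for some partitions μ and ν, where ϱ_r = (r, r−1, …, 1) is the staircase partition. -/
/-- Sort the parts of a partition in weakly decreasing order. -/
def sortD (s : Multiset ℕ) : List ℕ := (s.sort (· ≤ ·)).reverse

/-- Pad a list with zeros up to length `n`. -/
def padZero (l : List ℕ) (n : ℕ) : List ℕ := l ++ List.replicate (n - l.length) 0

/-- The horizontal sum of two partitions (given as multisets of parts):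
add the parts coordinatewise after sorting in decreasing order. -/
def hSum (s t : Multiset ℕ) : Multiset ℕ :=
  ((List.zipWith (· + ·) (padZero (sortD s) (max (Multiset.card s) (Multiset.card t)))
      (padZero (sortD t) (max (Multiset.card s) (Multiset.card t))) : List ℕ) :
    Multiset ℕ).filter (0 < ·)

/-- The staircase partition `ϱ_r = (r, r-1, …, 1)` as a multiset of parts. -/
def staircase (r : ℕ) : Multiset ℕ := (Multiset.range (r + 1)).filter (0 < ·)

section helpers

lemma coe_sortD (s : Multiset ℕ) : (↑(sortD s) : Multiset ℕ) = s := by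
  simp [sortD, Multiset.sort_eq]

lemma sortD_length (s : Multiset ℕ) : (sortD s).length = Multiset.card s := by
  simp [sortD]

lemma sortD_sorted (s : Multiset ℕ) : (sortD s).Pairwise (· ≥ ·) := by
  rw [sortD, List.pairwise_reverse]
  exact (Multiset.pairwise_sort s (· ≤ ·)).imp fun h => h

lemma sortD_coe_of_sorted {l : List ℕ} (h : l.Pairwise (· ≥ ·)) : sortD ↑l = l := by
  apply List.Perm.eq_of_pairwise' (r := (· ≥ ·)) (sortD_sorted _) h
  rw [← Multiset.coe_eq_coe, coe_sortD]

def sList : ℕ → List ℕ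
  | 0 => []
  | (r+1) => (r+1) :: sList r

lemma sList_length (r : ℕ) : (sList r).length = r := by
  induction r with
  | zero => rfl
  | succ n ih => simp [sList, ih]

lemma sList_getElem (r i : ℕ) (h : i < (sList r).length) : (sList r)[i] = r - i := by
  induction r generalizing i with
  | zero => simp [sList_length] at h
  | succ n ih =>
    cases i with
    | zero => simp [sList]
    | succ j =>
      simp only [sList, List.getElem_cons_succ]
      rw [ih]
      omega

lemma sList_coe (r : ℕ) : (↑(sList r) : Multiset ℕ) = staircase r := by
  induction r with
  | zero =>
    have : staircase 0 = 0 := by decide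
    simp [sList, this]
  | succ n ih =>
    rw [staircase, Multiset.range_succ, Multiset.filter_cons]
    simp only [Nat.succ_pos, if_pos]
    rw [← staircase, ← ih, sList]
    simp

lemma sList_sorted (r : ℕ) : (sList r).Pairwise (· > ·) := by
  rw [List.pairwise_iff_getElem]
  intro i j hi hj hij
  rw [sList_getElem, sList_getElem]
  rw [sList_length] at hi hj
  omega

lemma sortD_staircase (r : ℕ) : sortD (staircase r) = sList r := by
  rw [← sList_coe, sortD_coe_of_sorted ((sList_sorted r).imp le_of_lt)]

lemma card_staircase (r : ℕ) : Multiset.card (staircase r) = r := by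
  rw [← sList_coe]; simp [sList_length]

lemma gap_lemma {l : List ℕ} (h : l.Pairwise (· > ·)) :
    ∀ d i, (hd : i + d < l.length) → l[i + d] + d ≤ l[i]'(by omega) := by
  intro d
  induction d with
  | zero => intro i hd; simp
  | succ m ih =>
    intro i hd
    have h1 : l[i+1]'(by omega) < l[i]'(by omega) := by
      rw [List.pairwise_iff_getElem] at h
      exact h i (i+1) (by omega) (by omega) (by omega)
    have h2 := ih (i+1) (by omega)
    have he : i + (m+1) = (i+1) + m := by omega
    simp only [he]
    omega

lemma lower_bound {l : List ℕ} (h : l.Pairwise (· > ·)) (hp : ∀ x ∈ l, 0 < x) :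
    ∀ i, (hi : i < l.length) → l.length ≤ l[i] + i := by
  intro i hi
  have hd : i + (l.length - 1 - i) < l.length := by omega
  have := gap_lemma h (l.length - 1 - i) i hd
  have hpos : 0 < l[i + (l.length - 1 - i)] := hp _ (List.getElem_mem _)
  omega

lemma sorted_eq_filter_pad {l : List ℕ} (h : l.Pairwise (· ≥ ·)) :
    padZero (l.filter (0 < ·)) l.length = l := by
  induction l with
  | nil => rfl
  | cons x t ih =>
    rcases Nat.eq_zero_or_pos x with hx | hx
    · have hall : ∀ y ∈ x :: t, y = 0 := by
        intro y hy
        rcases List.mem_cons.1 hy with rfl | hy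
        · exact hx
        · have := (List.pairwise_cons.1 h).1 y hy
          omega
      have hfil : (x :: t).filter (0 < ·) = [] := by
        rw [List.filter_eq_nil_iff]
        intro a ha
        simp [hall a ha]
      rw [hfil, padZero]
      simp only [List.nil_append, List.length_nil, Nat.sub_zero]
      exact (List.eq_replicate_iff.2 ⟨by simp, fun b hb => hall b hb⟩).symm
    · have hfil : (x :: t).filter (0 < ·) = x :: t.filter (0 < ·) := by
        rw [List.filter_cons_of_pos (by simpa using hx)]
      rw [hfil, padZero] at *
      simp only [List.length_cons, List.cons_append]
      have ihh := ih (List.pairwise_cons.1 h).2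
      congr 1
      rw [← ihh]
      congr 2
      simp

lemma padZero_length (l : List ℕ) (n : ℕ) : (padZero l n).length = max l.length n := by
  simp [padZero]; omega

lemma padZero_getElem_left (l : List ℕ) (n : ℕ) {i : ℕ} (h : i < l.length)
    (h' : i < (padZero l n).length) : (padZero l n)[i] = l[i] :=
  List.getElem_append_left h

lemma padZero_getElem_right (l : List ℕ) (n : ℕ) {i : ℕ} (h : l.length ≤ i)
    (h' : i < (padZero l n).length) : (padZero l n)[i] = 0 := by
  unfold padZero at h' ⊢
  rw [List.getElem_append_right h, List.getElem_replicate]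

lemma padZero_sorted {l : List ℕ} (h : l.Pairwise (· ≥ ·)) (n : ℕ) :
    (padZero l n).Pairwise (· ≥ ·) := by
  rw [padZero, List.pairwise_append]
  refine ⟨h, ?_, ?_⟩
  · exact List.pairwise_replicate.2 (Or.inr le_rfl)
  · intro a _ b hb
    rw [List.eq_of_mem_replicate hb]
    exact Nat.zero_le a

lemma padZero_getD (l : List ℕ) (n i : ℕ) : (padZero l n).getD i 0 = l.getD i 0 := by
  rcases Nat.lt_or_ge i l.length with h | h
  · rw [List.getD_eq_getElem _ _ h,
      List.getD_eq_getElem _ _ (show i < (padZero l n).length by rw [padZero_length]; omega),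
      padZero_getElem_left _ _ h]
  · rw [List.getD_eq_default _ _ h]
    rcases Nat.lt_or_ge i (padZero l n).length with h2 | h2
    · rw [List.getD_eq_getElem _ _ h2, padZero_getElem_right _ _ h]
    · rw [List.getD_eq_default _ _ h2]

lemma zipWith_getD (L S : List ℕ) (i : ℕ) (hlen : L.length = S.length) :
    (List.zipWith (· + ·) L S).getD i 0 = L.getD i 0 + S.getD i 0 := by
  rcases Nat.lt_or_ge i L.length with h | h
  · have hz : i < (List.zipWith (· + ·) L S).length := by
      rw [List.length_zipWith]; omega
    rw [List.getD_eq_getElem _ _ hz, List.getD_eq_getElem _ _ h,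
      List.getD_eq_getElem _ _ (show i < S.length by omega)]
    exact List.getElem_zipWith
  · rw [List.getD_eq_default _ _ (show (List.zipWith (· + ·) L S).length ≤ i by
        rw [List.length_zipWith]; omega),
      List.getD_eq_default _ _ h, List.getD_eq_default _ _ (by omega)]

lemma sList_getD (r i : ℕ) (h : i < r) : (sList r).getD i 0 = r - i := by
  rw [List.getD_eq_getElem _ _ (by rw [sList_length]; omega)]
  exact sList_getElem r i _

lemma sorted_getD_anti {l : List ℕ} (h : l.Pairwise (· ≥ ·)) {i j : ℕ} (hij : i ≤ j) :
    l.getD j 0 ≤ l.getD i 0 := by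
  rcases Nat.lt_or_ge j l.length with hj | hj
  · rcases Nat.eq_or_lt_of_le hij with rfl | hlt
    · rfl
    · rw [List.getD_eq_getElem _ _ hj, List.getD_eq_getElem _ _ (by omega)]
      rw [List.pairwise_iff_getElem] at h
      exact h i j (by omega) hj hlt
  · rw [List.getD_eq_default _ _ hj]
    exact Nat.zero_le _

/-- Backward key lemma: the horizontal sum with a staircase has ≥ r distinct parts. -/
lemma staircase_hSum_distinct (ν : Multiset ℕ) (r : ℕ) :
    r ≤ (hSum ν (staircase r)).toFinset.card := by
  classical
  have hrm : r ≤ max (Multiset.card ν) (Multiset.card (staircase r)) := by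
    rw [card_staircase]; exact le_max_right _ _
  set m := max (Multiset.card ν) (Multiset.card (staircase r)) with hm
  set L := padZero (sortD ν) m with hL
  set S := padZero (sortD (staircase r)) m with hS
  set c := List.zipWith (· + ·) L S with hc
  have hLlen : L.length = m := by
    rw [hL, padZero_length, sortD_length]
    exact max_eq_right (le_max_left _ _)
  have hSlen : S.length = m := by
    rw [hS, padZero_length, sortD_length, card_staircase]
    exact max_eq_right hrm
  have hclen : c.length = m := by
    rw [hc, List.length_zipWith, hLlen, hSlen, min_self]
  have hSget : ∀ i, i < r → S.getD i 0 = r - i := by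
    intro i hir
    rw [hS, padZero_getD, sortD_staircase, sList_getD r i hir]
  have hLsorted : L.Pairwise (· ≥ ·) := padZero_sorted (sortD_sorted ν) m
  have hcget : ∀ i, c.getD i 0 = L.getD i 0 + S.getD i 0 := by
    intro i
    rw [hc, zipWith_getD _ _ _ (by omega)]
  have hstrict : ∀ i j, i < j → j < r → c.getD j 0 < c.getD i 0 := by
    intro i j hij hjr
    rw [hcget i, hcget j, hSget i (by omega), hSget j (by omega)]
    have := sorted_getD_anti hLsorted (le_of_lt hij)
    omega
  have hmem : ∀ i, i < r → c.getD i 0 ∈ (hSum ν (staircase r)).toFinset := by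
    intro i hir
    have hi : i < c.length := by omega
    rw [Multiset.mem_toFinset, hSum, Multiset.mem_filter]
    rw [← hm, ← hL, ← hS, ← hc]
    constructor
    · rw [List.getD_eq_getElem _ _ hi]
      exact List.getElem_mem hi
    · have : 0 < c.getD i 0 := by
        rw [hcget i, hSget i hir]
        omega
      simpa using this
  calc r = (Finset.range r).card := by simp
    _ ≤ (hSum ν (staircase r)).toFinset.card := by
        apply Finset.card_le_card_of_injOn (fun i => c.getD i 0)
        · intro i hi
          exact hmem i (Finset.mem_range.1 hi)
        · intro i hi j hj hij
          simp only [Finset.coe_range, Set.mem_Iio] at hi hj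
          dsimp only at hij
          by_contra hne
          rcases Nat.lt_or_ge i j with h' | h'
          · have := hstrict i j h' hj
            omega
          · have := hstrict j i (by omega) hi
            omega

lemma lower_bound' {l : List ℕ} (h : l.Pairwise (· > ·)) (hp : ∀ x ∈ l, 0 < x) :
    ∀ i, i < l.length → l.length ≤ l.getD i 0 + i := by
  intro i hi
  rw [List.getD_eq_getElem _ _ hi]
  exact lower_bound h hp i hi

lemma gap_lemma' {l : List ℕ} (h : l.Pairwise (· > ·)) :
    ∀ i j, i ≤ j → j < l.length → l.getD j 0 + (j - i) ≤ l.getD i 0 := by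
  intro i j hij hj
  rw [List.getD_eq_getElem _ _ hj, List.getD_eq_getElem _ _ (by omega)]
  have := gap_lemma h (j - i) i (by omega)
  have he : i + (j - i) = j := by omega
  simp only [he] at this
  omega

lemma zipWith_getD' (f : ℕ → ℕ → ℕ) (hf : f 0 0 = 0) (L S : List ℕ) (i : ℕ)
    (hlen : L.length = S.length) :
    (List.zipWith f L S).getD i 0 = f (L.getD i 0) (S.getD i 0) := by
  rcases Nat.lt_or_ge i L.length with h | h
  · have hz : i < (List.zipWith f L S).length := by
      rw [List.length_zipWith]; omega
    rw [List.getD_eq_getElem _ _ hz, List.getD_eq_getElem _ _ h,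
      List.getD_eq_getElem _ _ (show i < S.length by omega)]
    exact List.getElem_zipWith
  · rw [List.getD_eq_default _ _ (show (List.zipWith f L S).length ≤ i by
        rw [List.length_zipWith]; omega),
      List.getD_eq_default _ _ h, List.getD_eq_default _ _ (by omega), hf]

/-- Forward key lemma: a strictly decreasing positive list is a horizontal sum with a staircase. -/
lemma exists_hSum_of_strict {a : List ℕ} (ha : a.Pairwise (· > ·)) (hp : ∀ x ∈ a, 0 < x) :
    ∃ ν : Multiset ℕ, (∀ x ∈ ν, 0 < x) ∧ hSum ν (staircase a.length) = ↑a := by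
  classical
  obtain ⟨r, hr⟩ : ∃ r, a.length = r := ⟨_, rfl⟩
  obtain ⟨b, hb⟩ : ∃ b, b = List.zipWith (· - ·) a (sList r) := ⟨_, rfl⟩
  rw [hr]
  have hblen : b.length = r := by
    rw [hb, List.length_zipWith, sList_length, hr, min_self]
  have hlow := lower_bound' ha hp
  have hbget : ∀ i, i < r → b.getD i 0 = a.getD i 0 - (r - i) := by
    intro i hi
    rw [hb, zipWith_getD' _ rfl _ _ _ (by rw [sList_length, hr]), sList_getD r i hi]
  have hbsorted : b.Pairwise (· ≥ ·) := by
    rw [List.pairwise_iff_getElem]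
    intro i j hi hj hij
    rw [hblen] at hi hj
    rw [← List.getD_eq_getElem b 0, ← List.getD_eq_getElem b 0]
    rw [hbget i (by omega), hbget j (by omega)]
    have h1 := gap_lemma' ha i j (by omega) (by omega)
    have h2 := hlow j (by omega)
    rw [hr] at h2
    omega
  refine ⟨↑(b.filter (0 < ·)), ?_, ?_⟩
  · intro x hx
    rw [Multiset.mem_coe, List.mem_filter] at hx
    simpa using hx.2
  · have hcard : Multiset.card (↑(b.filter (0 < ·)) : Multiset ℕ) ≤ r := by
      rw [Multiset.coe_card]
      calc (b.filter (0 < ·)).length ≤ b.length := List.length_filter_le _ _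
        _ = r := hblen
    have hmax : max (Multiset.card (↑(b.filter (0 < ·)) : Multiset ℕ))
        (Multiset.card (staircase r)) = r := by
      rw [card_staircase]
      omega
    rw [hSum, hmax, sortD_staircase, sortD_coe_of_sorted (hbsorted.filter _)]
    have hpad1 : padZero (b.filter (0 < ·)) r = b := by
      rw [← hblen]; exact sorted_eq_filter_pad hbsorted
    have hpad2 : padZero (sList r) r = sList r := by
      rw [padZero, sList_length, Nat.sub_self, List.replicate_zero, List.append_nil]
    rw [hpad1, hpad2]
    have hzip : List.zipWith (· + ·) b (sList r) = a := by
      apply List.ext_getElem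
      · rw [List.length_zipWith, hblen, sList_length, min_self, hr]
      · intro i h1 h2
        have hir : i < r := by
          have := h1
          rw [List.length_zipWith, hblen, sList_length, min_self] at this
          exact this
        rw [← List.getD_eq_getElem _ 0, ← List.getD_eq_getElem a 0,
          zipWith_getD' _ rfl _ _ _ (by rw [hblen, sList_length]),
          hbget i hir, sList_getD r i hir]
        have h3 := hlow i (by omega)
        rw [hr] at h3
        omega
    rw [hzip]
    rw [Multiset.filter_eq_self]
    intro x hx
    simpa using hp x hx

end helpers

/-- A partition `λ` has at least `r` distinct row lengths iff it can be written
as `μ +_V (ν +_H ϱ_r)` for some partitions `μ, ν` (the vertical sum `+_V` is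
the union of part multisets, i.e. multiset addition). -/
theorem distRows_ge_iff_staircase_decomposition (s : Multiset ℕ) (r : ℕ)
    (hpos : ∀ x ∈ s, 0 < x) :
    r ≤ s.toFinset.card ↔
      ∃ μ ν : Multiset ℕ, (∀ x ∈ μ, 0 < x) ∧ (∀ x ∈ ν, 0 < x) ∧
        s = μ + hSum ν (staircase r) := by
  classical
  constructor
  · intro h
    obtain ⟨T, hTsub, hTcard⟩ := Finset.exists_subset_card_eq h
    have hTmem : ∀ x ∈ T, x ∈ s := fun x hx => Multiset.mem_toFinset.1 (hTsub hx)
    have hTle : T.val ≤ s := by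
      rw [Multiset.le_iff_count]
      intro x
      by_cases hx : x ∈ T
      · rw [Multiset.count_eq_one_of_mem T.nodup hx]
        exact Multiset.one_le_count_iff_mem.2 (hTmem x hx)
      · rw [Multiset.count_eq_zero_of_notMem hx]
        exact Nat.zero_le _
    set a := sortD T.val with haa
    have hacoe : (↑a : Multiset ℕ) = T.val := coe_sortD _
    have hanodup : a.Nodup := by
      have := T.nodup
      rw [← hacoe, Multiset.coe_nodup] at this
      exact this
    have hastrict : a.Pairwise (· > ·) := by
      have h1 : a.Pairwise (fun x y => x ≥ y ∧ x ≠ y) :=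
        List.Pairwise.and (sortD_sorted _) hanodup
      exact h1.imp fun ⟨h2, h3⟩ => lt_of_le_of_ne h2 (Ne.symm h3)
    have hapos : ∀ x ∈ a, 0 < x := by
      intro x hx
      apply hpos
      apply Multiset.mem_of_le hTle
      rw [← hacoe]
      exact hx
    have halen : a.length = r := by
      rw [haa, sortD_length]
      simpa using hTcard
    obtain ⟨ν, hν, hνeq⟩ := exists_hSum_of_strict hastrict hapos
    rw [halen, hacoe] at hνeq
    refine ⟨s - T.val, ν, ?_, hν, ?_⟩
    · intro x hx
      exact hpos x (Multiset.mem_of_le (tsub_le_self) hx)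
    · rw [hνeq, tsub_add_cancel_of_le hTle]
  · rintro ⟨μ, ν, hμ, hν, rfl⟩
    calc r ≤ (hSum ν (staircase r)).toFinset.card := staircase_hSum_distinct ν r
      _ ≤ (μ + hSum ν (staircase r)).toFinset.card := by
          apply Finset.card_le_card
          rw [Multiset.toFinset_add]
          exact Finset.subset_union_right
end

section
/- Given at least ⌈10/α⌉ subsets of {1, …, N}, each of size at least αN (where 0 < α ≤ 1), there exist two of them whose intersection has size at least α²N/2. -/
open Finset

/-- Given at least `⌈10/α⌉` subsets of `{1, …, N}`, each of size at least
`αN` (with `0 < α ≤ 1`), two of them intersect in at least `α²N/2` elements. -/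
theorem exists_pair_large_intersection (N t : ℕ) (hN : 0 < N)
    (α : ℝ) (hα0 : 0 < α) (hα1 : α ≤ 1) (ht : 10 / α ≤ (t : ℝ))
    (A : Fin t → Finset ℕ)
    (hsub : ∀ i, A i ⊆ Finset.Icc 1 N)
    (hsize : ∀ i, α * N ≤ ((A i).card : ℝ)) :
    ∃ i j, i ≠ j ∧ α ^ 2 * N / 2 ≤ (((A i ∩ A j).card : ℝ)) := by
  by_contra hcon
  push_neg at hcon
  have htα : (10 : ℝ) ≤ t * α := by
    rw [div_le_iff₀ hα0] at ht; linarith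
  have htR : (2 : ℝ) ≤ t := by nlinarith [Nat.cast_nonneg (α := ℝ) t]
  have ht2 : (2 : ℕ) ≤ t := by exact_mod_cast htR
  set I := Finset.Icc 1 N with hI
  have hIcard : I.card = N := by simp [hI]
  set d : ℕ → ℕ := fun x => (univ.filter (fun i => x ∈ A i)).card with hd
  have hdsum : ∀ x, (d x : ℝ) = ∑ i : Fin t, if x ∈ A i then (1 : ℝ) else 0 := by
    intro x
    rw [Finset.sum_boole]
  have hfil : ∀ i : Fin t, I.filter (· ∈ A i) = A i := by
    intro i
    rw [filter_mem_eq_inter, inter_eq_right.mpr (hsub i)]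
  -- lemma 1 : column sums
  have hcol : ∀ i : Fin t, ∑ x ∈ I, (if x ∈ A i then (1 : ℝ) else 0) = (A i).card := by
    intro i
    rw [Finset.sum_boole, hfil i]
  have h1 : ∑ x ∈ I, (d x : ℝ) = ∑ i : Fin t, ((A i).card : ℝ) := by
    simp_rw [hdsum]
    rw [Finset.sum_comm]
    exact Finset.sum_congr rfl fun i _ => hcol i
  -- lemma 2 : sum of squares
  have hcol2 : ∀ i j : Fin t,
      ∑ x ∈ I, (if x ∈ A i then (1 : ℝ) else 0) * (if x ∈ A j then (1 : ℝ) else 0)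
        = ((A i ∩ A j).card : ℝ) := by
    intro i j
    have step : ∀ x ∈ I, (if x ∈ A i then (1 : ℝ) else 0) * (if x ∈ A j then (1 : ℝ) else 0)
        = if x ∈ A i ∩ A j then (1 : ℝ) else 0 := by
      intro x _
      by_cases h1 : x ∈ A i <;> by_cases h2 : x ∈ A j <;> simp [h1, h2, Finset.mem_inter]
    rw [Finset.sum_congr rfl step, Finset.sum_boole]
    congr 1
    rw [filter_mem_eq_inter, inter_eq_right.mpr fun x hx => hsub i (Finset.mem_inter.mp hx).1]
  have h2 : ∑ x ∈ I, (d x : ℝ) ^ 2 = ∑ i : Fin t, ∑ j : Fin t, ((A i ∩ A j).card : ℝ) := by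
    have e : ∀ x, (d x : ℝ) ^ 2 = ∑ i : Fin t, ∑ j : Fin t,
        (if x ∈ A i then (1 : ℝ) else 0) * (if x ∈ A j then (1 : ℝ) else 0) := by
      intro x
      rw [sq, hdsum, Finset.sum_mul_sum]
    simp_rw [e]
    rw [Finset.sum_comm]
    refine Finset.sum_congr rfl fun i _ => ?_
    rw [Finset.sum_comm]
    exact Finset.sum_congr rfl fun j _ => hcol2 i j
  -- Cauchy-Schwarz
  have hcs : (∑ x ∈ I, (d x : ℝ)) ^ 2 ≤ N * ∑ x ∈ I, (d x : ℝ) ^ 2 := by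
    have := sq_sum_le_card_mul_sum_sq (s := I) (f := fun x => (d x : ℝ))
    rwa [hIcard] at this
  set S : ℝ := ∑ i : Fin t, ((A i).card : ℝ) with hS
  have hSlb : (t : ℝ) * α * N ≤ S := by
    rw [hS]
    calc (t : ℝ) * α * N = ∑ _i : Fin t, α * N := by
          rw [Finset.sum_const, card_univ, Fintype.card_fin]; ring
      _ ≤ ∑ i : Fin t, ((A i).card : ℝ) := Finset.sum_le_sum fun i _ => hsize i
  have hdiag : ∀ i : Fin t, ((A i ∩ A i).card : ℝ) = ((A i).card : ℝ) := by
    intro i; rw [Finset.inter_self]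
  -- off-diagonal sum upper bound
  have hoff : ∑ i : Fin t, ∑ j : Fin t, ((A i ∩ A j).card : ℝ)
      < S + (t : ℝ) * ((t : ℝ) - 1) * (α ^ 2 * N / 2) := by
    have key : ∀ i : Fin t, ∑ j : Fin t, ((A i ∩ A j).card : ℝ)
        < ((A i).card : ℝ) + ((t : ℝ) - 1) * (α ^ 2 * N / 2) := by
      intro i
      rw [← Finset.add_sum_erase univ _ (Finset.mem_univ i), hdiag]
      have hne : (univ.erase i).Nonempty := by
        rw [← Finset.card_pos, Finset.card_erase_of_mem (mem_univ i), card_univ,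
          Fintype.card_fin]
        omega
      have hlt : ∑ j ∈ univ.erase i, ((A i ∩ A j).card : ℝ)
          < ∑ _j ∈ univ.erase i, (α ^ 2 * N / 2) := by
        refine Finset.sum_lt_sum_of_nonempty hne fun j hj => ?_
        exact hcon i j (Ne.symm (Finset.ne_of_mem_erase hj))
      rw [Finset.sum_const, Finset.card_erase_of_mem (mem_univ i), card_univ,
        Fintype.card_fin, nsmul_eq_mul] at hlt
      have hcast : ((t - 1 : ℕ) : ℝ) = (t : ℝ) - 1 := by
        have h1t : (1:ℕ) ≤ t := by omega
        push_cast [h1t]; ring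
      rw [hcast] at hlt
      linarith
    calc ∑ i : Fin t, ∑ j : Fin t, ((A i ∩ A j).card : ℝ)
        < ∑ i : Fin t, (((A i).card : ℝ) + ((t : ℝ) - 1) * (α ^ 2 * N / 2)) := by
          refine Finset.sum_lt_sum_of_nonempty ?_ fun i _ => key i
          exact ⟨⟨0, by omega⟩, mem_univ _⟩
      _ = S + (t : ℝ) * ((t : ℝ) - 1) * (α ^ 2 * N / 2) := by
          rw [Finset.sum_add_distrib, Finset.sum_const, card_univ, Fintype.card_fin,
            nsmul_eq_mul, hS]
          ring
  rw [h1, h2] at hcs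
  have hNpos : (0 : ℝ) < N := by exact_mod_cast hN
  have hfin : S ^ 2 < N * (S + (t : ℝ) * ((t : ℝ) - 1) * (α ^ 2 * N / 2)) :=
    lt_of_le_of_lt hcs ((mul_lt_mul_iff_right₀ hNpos).mpr hoff)
  have hN1 : (1 : ℝ) ≤ N := by exact_mod_cast hN
  have hu0 : (0 : ℝ) ≤ t * α := by linarith
  have hhint1 : (0 : ℝ) ≤ (S - t * α * N) * (S + t * α * N - N) := by
    apply mul_nonneg (by linarith)
    nlinarith
  have hhint2 : (0 : ℝ) ≤ (t * α) * (t * α - 2 + α) * (N * N) :=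
    mul_nonneg (mul_nonneg hu0 (by linarith)) (by positivity)
  nlinarith [hhint1, hhint2, hfin]
end

section
/- With λ, λ̂, n, k, M, m as above (λ = λ̂ +_H 1_m, λ̂ of size k with first row M = max(a₂, b₁)), the number of standard Young tableaux of shape λ satisfies the lower bound dim(λ) ≥ C(n − M, k − M), where C denotes the binomial coefficient. -/
/-- A standard Young tableau of shape `μ`: a bijective labelling of the cells
of `μ` by `0, …, |μ|−1` that is strictly increasing along rows and columns. -/
def IsSYT (μ : YoungDiagram) (T : μ.cells ≃ Fin μ.card) : Prop :=
  ∀ c d : μ.cells, (c : ℕ × ℕ).1 ≤ (d : ℕ × ℕ).1 → (c : ℕ × ℕ).2 ≤ (d : ℕ × ℕ).2 →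
    c ≠ d → (T c : ℕ) < (T d : ℕ)

/-- The number of standard Young tableaux of shape `μ` (the dimension of the
corresponding irreducible representation of the symmetric group). -/
noncomputable def dimSYT (μ : YoungDiagram) : ℕ :=
  Nat.card {T : μ.cells ≃ Fin μ.card // IsSYT μ T}

namespace DimSYTAux

/-- The `i`-th smallest element of a finite set of naturals. -/
noncomputable def enum (A : Finset ℕ) (i : ℕ) : ℕ :=
  if h : i < A.card then A.orderEmbOfFin rfl ⟨i, h⟩ else 0

theorem enum_mem {A : Finset ℕ} {i : ℕ} (h : i < A.card) : enum A i ∈ A := by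
  simp only [enum, dif_pos h]
  exact A.orderEmbOfFin_mem rfl _

theorem enum_lt {A : Finset ℕ} {i j : ℕ} (hij : i < j) (hj : j < A.card) :
    enum A i < enum A j := by
  have hi : i < A.card := hij.trans hj
  simp only [enum, dif_pos hi, dif_pos hj]
  exact (A.orderEmbOfFin rfl).strictMono (show (⟨i, hi⟩ : Fin A.card) < ⟨j, hj⟩ from hij)

theorem enum_inj {A : Finset ℕ} {i j : ℕ} (hi : i < A.card) (hj : j < A.card)
    (h : enum A i = enum A j) : i = j := by
  rcases lt_trichotomy i j with hlt | he | hgt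
  · exact absurd h (enum_lt hlt hj).ne
  · exact he
  · exact absurd h.symm (enum_lt hgt hi).ne

theorem enum_surj {A : Finset ℕ} {a : ℕ} (ha : a ∈ A) :
    ∃ i, i < A.card ∧ enum A i = a := by
  have : a ∈ Set.range (A.orderEmbOfFin rfl) := by
    rw [A.range_orderEmbOfFin rfl]; exact ha
  obtain ⟨i, hi⟩ := this
  refine ⟨i.1, i.2, ?_⟩
  simp only [enum, dif_pos i.2]
  rw [← hi]

/-- Rank of a cell in a finite set, according to a key function. -/
def rank (g : ℕ × ℕ → ℕ) (R : Finset (ℕ × ℕ)) (c : ℕ × ℕ) : ℕ :=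
  (R.filter fun x => g x < g c).card

theorem rank_lt_card {g : ℕ × ℕ → ℕ} {R : Finset (ℕ × ℕ)} {c : ℕ × ℕ} (hc : c ∈ R) :
    rank g R c < R.card := by
  apply Finset.card_lt_card
  refine ⟨Finset.filter_subset _ _, fun h => ?_⟩
  simpa using (Finset.mem_filter.1 (h hc)).2

theorem rank_lt_rank {g : ℕ × ℕ → ℕ} {R : Finset (ℕ × ℕ)} {c d : ℕ × ℕ}
    (hc : c ∈ R) (hcd : g c < g d) : rank g R c < rank g R d := by
  apply Finset.card_lt_card
  constructor
  · exact Finset.monotone_filter_right _ (fun x _ hx => lt_trans hx hcd)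
  · intro h
    have := h (Finset.mem_filter.2 ⟨hc, hcd⟩)
    simpa using (Finset.mem_filter.1 this).2

theorem rank_surj {g : ℕ × ℕ → ℕ} {R : Finset (ℕ × ℕ)} (hg : Set.InjOn g ↑R)
    {i : ℕ} (hi : i < R.card) : ∃ c ∈ R, rank g R c = i := by
  classical
  set e : {x // x ∈ R} → Fin R.card :=
    fun c => ⟨rank g R c.1, rank_lt_card c.2⟩ with he
  have hinj : Function.Injective e := by
    intro c d h
    simp only [he, Fin.mk.injEq] at h
    rcases lt_trichotomy (g c.1) (g d.1) with hlt | heq | hgt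
    · exact absurd h (rank_lt_rank c.2 hlt).ne
    · exact Subtype.ext (hg (by exact_mod_cast c.2) (by exact_mod_cast d.2) heq)
    · exact absurd h.symm (rank_lt_rank d.2 hgt).ne
  have hbij : Function.Bijective e :=
    (Fintype.bijective_iff_injective_and_card e).2 ⟨hinj, by simp [Fintype.card_coe]⟩
  obtain ⟨c, hc⟩ := hbij.2 ⟨i, hi⟩
  exact ⟨c.1, c.2, congrArg Fin.val hc⟩

end DimSYTAux

open DimSYTAux in
/-- With `λ = λ̂ +_H 1_m`, where `λ̂ ⊢ k` is `λ` with its first row shortened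
to `M = max(a₂, b₁)`, the number of standard Young tableaux satisfies
`dim(λ) ≥ C(n − M, k − M)`. -/
theorem dimSYT_lower_bound (lam lamhat : YoungDiagram) (M : ℕ)
    (hM : M = max (lam.rowLen 1) (lam.colLen 0))
    (hMle : M ≤ lam.rowLen 0)
    (hhat : ∀ c : ℕ × ℕ, c ∈ lamhat ↔ (c ∈ lam ∧ (c.1 = 0 → c.2 < M))) :
    Nat.choose (lam.card - M) (lamhat.card - M) ≤ dimSYT lam := by
  classical
  set n := lam.card with hn
  set k := lamhat.card with hk0
  set B := lam.rowLen 0 + 1 with hB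
  set g : ℕ × ℕ → ℕ := fun c => B * c.1 + c.2 with hgdef
  set R : Finset (ℕ × ℕ) := lam.cells.filter (fun c => c.1 ≠ 0) with hRdef
  have hrow1 : lam.rowLen 1 ≤ M := hM ▸ le_max_left _ _
  have hrow0M : ∀ j, j < M → ((0 : ℕ), j) ∈ lam := fun j hj =>
    YoungDiagram.mem_iff_lt_rowLen.2 (lt_of_lt_of_le hj hMle)
  -- column bound for cells
  have hcol : ∀ c : ℕ × ℕ, c ∈ lam.cells → c.2 < B := by
    intro c hc
    have : (c.1, c.2) ∈ lam := by simpa using hc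
    have := YoungDiagram.mem_iff_lt_rowLen.1 this
    calc c.2 < lam.rowLen c.1 := this
      _ ≤ lam.rowLen 0 := lam.rowLen_anti 0 c.1 (Nat.zero_le _)
      _ < B := Nat.lt_succ_self _
  have hgdiv : ∀ c : ℕ × ℕ, c ∈ lam.cells → g c / B = c.1 ∧ g c % B = c.2 := by
    intro c hc
    have hcB := hcol c hc
    constructor
    · simp only [hgdef]
      rw [Nat.mul_add_div (by omega : 0 < B), Nat.div_eq_of_lt hcB]
      omega
    · simp only [hgdef]
      rw [Nat.mul_add_mod, Nat.mod_eq_of_lt hcB]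
  have hgmono : ∀ c d : ℕ × ℕ, c ∈ lam.cells → d ∈ lam.cells →
      c.1 ≤ d.1 → c.2 ≤ d.2 → c ≠ d → g c < g d := by
    intro c d hc hd h1 h2 hne
    rcases lt_or_eq_of_le h1 with h1' | h1'
    · have hcB := hcol c hc
      calc g c = B * c.1 + c.2 := rfl
        _ < B * c.1 + B := by omega
        _ = B * (c.1 + 1) := by ring
        _ ≤ B * d.1 := Nat.mul_le_mul_left _ h1'
        _ ≤ g d := Nat.le_add_right _ _
    · have h2' : c.2 < d.2 := by
        rcases lt_or_eq_of_le h2 with h | h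
        · exact h
        · exact absurd (Prod.ext h1' h) hne
      simp only [hgdef, h1']
      omega
  have hginj : Set.InjOn g ↑lam.cells := by
    intro c hc d hd h
    obtain ⟨e1, e2⟩ := hgdiv c (by exact_mod_cast hc)
    obtain ⟨e3, e4⟩ := hgdiv d (by exact_mod_cast hd)
    rw [h] at e1 e2
    exact Prod.ext (e1.symm.trans e3) (e2.symm.trans e4)
  have hRsub : R ⊆ lam.cells := Finset.filter_subset _ _
  have hginjR : Set.InjOn g ↑R := hginj.mono (by exact_mod_cast hRsub)
  -- cardinalities
  have hkcard : k = M + R.card := by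
    have hsplit := Finset.card_filter_add_card_filter_not
      (s := lamhat.cells) (p := fun c : ℕ × ℕ => c.1 = 0)
    have h0 : lamhat.cells.filter (fun c : ℕ × ℕ => c.1 = 0) =
        (Finset.range M).image (fun j => ((0 : ℕ), j)) := by
      ext c
      simp only [Finset.mem_filter, Finset.mem_image, Finset.mem_range,
        YoungDiagram.mem_cells]
      constructor
      · rintro ⟨hc, h1⟩
        have := (hhat c).1 hc
        exact ⟨c.2, this.2 h1, Prod.ext h1.symm rfl⟩
      · rintro ⟨j, hj, rfl⟩
        exact ⟨(hhat (0, j)).2 ⟨hrow0M j hj, fun _ => hj⟩, rfl⟩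
    have h1 : lamhat.cells.filter (fun c : ℕ × ℕ => ¬ c.1 = 0) = R := by
      ext c
      simp only [hRdef, Finset.mem_filter, YoungDiagram.mem_cells]
      constructor
      · rintro ⟨hc, h1⟩; exact ⟨((hhat c).1 hc).1, h1⟩
      · rintro ⟨hc, h1⟩; exact ⟨(hhat c).2 ⟨hc, fun h => absurd h h1⟩, h1⟩
    have himg : ((Finset.range M).image (fun j => ((0 : ℕ), j))).card = M := by
      rw [Finset.card_image_of_injective _ (fun a b h => by simpa using h),
        Finset.card_range]
    rw [h0, h1, himg] at hsplit
    have : lamhat.card = lamhat.cells.card := rfl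
    omega
  have hncard : n = lam.rowLen 0 + R.card := by
    have hsplit := Finset.card_filter_add_card_filter_not
      (s := lam.cells) (p := fun c : ℕ × ℕ => c.1 = 0)
    have h0 : lam.cells.filter (fun c : ℕ × ℕ => c.1 = 0) = lam.row 0 := by
      ext c
      simp only [Finset.mem_filter, YoungDiagram.mem_cells, YoungDiagram.mem_row_iff]
    have h1 : lam.cells.filter (fun c : ℕ × ℕ => ¬ c.1 = 0) = R := by
      ext c
      simp [hRdef]
    rw [h0, h1, ← YoungDiagram.rowLen_eq_card] at hsplit
    have : lam.card = lam.cells.card := rfl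
    omega
  have hr0n : lam.rowLen 0 ≤ n := by
    omega
  have hRk : R.card = k - M := by omega
  have hkn : k ≤ n := by omega
  set I : Finset ℕ := Finset.Ico M n with hIdef
  have hIcard : I.card = n - M := Nat.card_Ico M n
  -- the filling associated to a subset S
  set fS : Finset ℕ → ℕ × ℕ → ℕ := fun S c =>
    if c.1 = 0 then (if c.2 < M then c.2 else enum (I \ S) (c.2 - M))
    else enum S (rank g R c) with hfSdef
  have main : ∀ S ∈ Finset.powersetCard (k - M) I,
      ∃ T : {T : lam.cells ≃ Fin lam.card // IsSYT lam T},
        ∀ c : lam.cells, (T.1 c : ℕ) = fS S (c : ℕ × ℕ) := by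
    intro S hS
    obtain ⟨hSsub, hScard⟩ := Finset.mem_powersetCard.1 hS
    set C : Finset ℕ := I \ S with hCdef
    have hCcard : C.card = lam.rowLen 0 - M := by
      rw [hCdef, Finset.card_sdiff_of_subset hSsub, hIcard, hScard]; omega
    -- values of fS are < n and fall in the right zones
    have hSI : ∀ a ∈ S, M ≤ a ∧ a < n := fun a ha => by
      have := hSsub ha; rw [hIdef, Finset.mem_Ico] at this; exact this
    have hCI : ∀ a ∈ C, M ≤ a ∧ a < n := fun a ha => by
      have := (Finset.mem_sdiff.1 ha).1; rw [hIdef, Finset.mem_Ico] at this; exact this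
    have hzone : ∀ c : ℕ × ℕ, c ∈ lam.cells →
        (c.1 = 0 → c.2 < M → fS S c = c.2) ∧
        (c.1 = 0 → M ≤ c.2 → fS S c ∈ C) ∧
        (c.1 ≠ 0 → fS S c ∈ S) := by
      intro c hc
      refine ⟨fun h1 h2 => by simp [hfSdef, h1, h2], fun h1 h2 => ?_, fun h1 => ?_⟩
      · have hlt : c.2 - M < C.card := by
          have : (c.1, c.2) ∈ lam := by simpa using hc
          have hcr := YoungDiagram.mem_iff_lt_rowLen.1 this
          rw [h1] at hcr
          omega
        simp only [hfSdef, h1, if_pos rfl, if_neg (by omega : ¬ c.2 < M)]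
        exact enum_mem hlt
      · have hcR : c ∈ R := Finset.mem_filter.2 ⟨hc, h1⟩
        have hlt : rank g R c < S.card := by
          rw [hScard, ← hRk]; exact rank_lt_card hcR
        simp only [hfSdef, if_neg h1]
        exact enum_mem hlt
    have hflt : ∀ c : ℕ × ℕ, c ∈ lam.cells → fS S c < n := by
      intro c hc
      obtain ⟨hz1, hz2, hz3⟩ := hzone c hc
      by_cases h1 : c.1 = 0
      · by_cases h2 : c.2 < M
        · rw [hz1 h1 h2]; omega
        · exact (hCI _ (hz2 h1 (by omega))).2
      · exact (hSI _ (hz3 h1)).2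
    have hCidx : ∀ e : ℕ × ℕ, e ∈ lam.cells → e.1 = 0 → M ≤ e.2 → e.2 - M < C.card := by
      intro e he h0 hM'
      have : (e.1, e.2) ∈ lam := by simpa using he
      have := YoungDiagram.mem_iff_lt_rowLen.1 this
      rw [h0] at this
      omega
    have hSidx : ∀ e : ℕ × ℕ, e ∈ R → rank g R e < S.card := by
      intro e he
      rw [hScard, ← hRk]
      exact rank_lt_card he
    -- monotonicity
    have hmono : ∀ c d : ℕ × ℕ, c ∈ lam.cells → d ∈ lam.cells →
        c.1 ≤ d.1 → c.2 ≤ d.2 → c ≠ d → fS S c < fS S d := by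
      intro c d hc hd h1 h2 hne
      obtain ⟨hz1c, hz2c, hz3c⟩ := hzone c hc
      obtain ⟨hz1d, hz2d, hz3d⟩ := hzone d hd
      by_cases hc1 : c.1 = 0
      · by_cases hd1 : d.1 = 0
        · have h2' : c.2 < d.2 := by
            rcases lt_or_eq_of_le h2 with h | h
            · exact h
            · exact absurd (Prod.ext (hc1.trans hd1.symm) h) hne
          by_cases hcM : c.2 < M
          · by_cases hdM : d.2 < M
            · rw [hz1c hc1 hcM, hz1d hd1 hdM]; exact h2'
            · rw [hz1c hc1 hcM]
              exact lt_of_lt_of_le hcM (hCI _ (hz2d hd1 (by omega))).1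
          · have hdM : ¬ d.2 < M := by omega
            simp only [hfSdef, hc1, hd1, if_pos rfl, if_neg hcM, if_neg hdM]
            exact enum_lt (by omega) (hCidx d hd hd1 (by omega))
        · have hdR : d ∈ R := Finset.mem_filter.2 ⟨hd, hd1⟩
          have hd2M : d.2 < M := by
            have : (d.1, d.2) ∈ lam := by simpa using hd
            have h' := YoungDiagram.mem_iff_lt_rowLen.1 this
            have := lam.rowLen_anti 1 d.1 (by omega)
            omega
          have hcM : c.2 < M := by omega
          rw [hz1c hc1 hcM]
          exact lt_of_lt_of_le (by omega) (hSI _ (hz3d hd1)).1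
      · have hd1 : d.1 ≠ 0 := by omega
        have hcR : c ∈ R := Finset.mem_filter.2 ⟨hc, hc1⟩
        have hdR : d ∈ R := Finset.mem_filter.2 ⟨hd, hd1⟩
        have hgcd := hgmono c d hc hd h1 h2 hne
        simp only [hfSdef, if_neg hc1, if_neg hd1]
        exact enum_lt (rank_lt_rank hcR hgcd) (hSidx d hdR)
    -- injectivity on cells
    have hfinj : ∀ c d : ℕ × ℕ, c ∈ lam.cells → d ∈ lam.cells →
        fS S c = fS S d → c = d := by
      intro c d hc hd h
      obtain ⟨hz1c, hz2c, hz3c⟩ := hzone c hc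
      obtain ⟨hz1d, hz2d, hz3d⟩ := hzone d hd
      have hSC : ∀ a ∈ S, a ∉ C := fun a ha hac => (Finset.mem_sdiff.1 hac).2 ha
      by_cases hc1 : c.1 = 0 <;> by_cases hd1 : d.1 = 0
      · by_cases hcM : c.2 < M <;> by_cases hdM : d.2 < M
        · rw [hz1c hc1 hcM, hz1d hd1 hdM] at h
          exact Prod.ext (hc1.trans hd1.symm) h
        · exfalso; rw [hz1c hc1 hcM] at h
          have := (hCI _ (hz2d hd1 (by omega))).1
          omega
        · exfalso; rw [hz1d hd1 hdM] at h
          have := (hCI _ (hz2c hc1 (by omega))).1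
          omega
        · simp only [hfSdef, hc1, hd1, if_pos rfl, if_neg hcM, if_neg hdM] at h
          have := enum_inj (hCidx c hc hc1 (by omega)) (hCidx d hd hd1 (by omega)) h
          exact Prod.ext (hc1.trans hd1.symm) (by omega)
      · exfalso
        have h1 := hz3d hd1
        by_cases hcM : c.2 < M
        · rw [hz1c hc1 hcM] at h
          have := (hSI _ h1).1
          omega
        · have h2 := hz2c hc1 (by omega)
          rw [h] at h2
          exact hSC _ h1 h2
      · exfalso
        have h1 := hz3c hc1
        by_cases hdM : d.2 < M
        · rw [hz1d hd1 hdM] at h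
          have := (hSI _ h1).1
          omega
        · have h2 := hz2d hd1 (by omega)
          rw [← h] at h2
          exact hSC _ h1 h2
      · have hcR : c ∈ R := Finset.mem_filter.2 ⟨hc, hc1⟩
        have hdR : d ∈ R := Finset.mem_filter.2 ⟨hd, hd1⟩
        simp only [hfSdef, if_neg hc1, if_neg hd1] at h
        have hrr := enum_inj (hSidx c hcR) (hSidx d hdR) h
        rcases lt_trichotomy (g c) (g d) with hg | hg | hg
        · exact absurd hrr (rank_lt_rank hcR hg).ne
        · exact hginj (by exact_mod_cast hc) (by exact_mod_cast hd) hg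
        · exact absurd hrr.symm (rank_lt_rank hdR hg).ne
    -- the equivalence
    have hflt' : ∀ c : lam.cells, fS S (c : ℕ × ℕ) < lam.card := fun c => hflt c c.2
    set Tfun : lam.cells → Fin lam.card := fun c => ⟨fS S (c : ℕ × ℕ), hflt' c⟩ with hTfun
    have hTinj : Function.Injective Tfun := by
      intro c d h
      exact Subtype.ext (hfinj c d c.2 d.2 (congrArg Fin.val h))
    have hTbij : Function.Bijective Tfun :=
      (Fintype.bijective_iff_injective_and_card Tfun).2
        ⟨hTinj, by rw [Fintype.card_coe, Fintype.card_fin]⟩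
    refine ⟨⟨Equiv.ofBijective Tfun hTbij, ?_⟩, fun c => rfl⟩
    intro c d h1 h2 hne
    exact hmono c d c.2 d.2 h1 h2 (fun h => hne (Subtype.ext h))
  choose F hF using main
  -- recovering S from the filling
  have recov : ∀ S ∈ Finset.powersetCard (k - M) I, S = R.image (fS S) := by
    intro S hS
    obtain ⟨hSsub, hScard⟩ := Finset.mem_powersetCard.1 hS
    apply Finset.ext
    intro a
    constructor
    · intro ha
      obtain ⟨i, hi, hia⟩ := enum_surj ha
      obtain ⟨c, hcR, hrk⟩ := rank_surj hginjR (by rw [hRk, ← hScard]; exact hi)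
      refine Finset.mem_image.2 ⟨c, hcR, ?_⟩
      have hc1 : c.1 ≠ 0 := (Finset.mem_filter.1 hcR).2
      simp only [hfSdef, if_neg hc1, hrk, hia]
    · intro ha
      obtain ⟨c, hcR, hfc⟩ := Finset.mem_image.1 ha
      have hc1 : c.1 ≠ 0 := (Finset.mem_filter.1 hcR).2
      have hlt : rank g R c < S.card := by
        rw [hScard, ← hRk]; exact rank_lt_card hcR
      rw [← hfc]
      simp only [hfSdef, if_neg hc1]
      exact enum_mem hlt
  set F' : {S // S ∈ Finset.powersetCard (k - M) I} →
      {T : lam.cells ≃ Fin lam.card // IsSYT lam T} := fun Sp => F Sp.1 Sp.2 with hF'def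
  have hF'inj : Function.Injective F' := by
    intro a b h
    apply Subtype.ext
    have heq : ∀ c ∈ R, fS a.1 c = fS b.1 c := by
      intro c hcR
      have hcc : c ∈ lam.cells := hRsub hcR
      have hFab : F a.1 a.2 = F b.1 b.2 := h
      calc fS a.1 c = ((F a.1 a.2).1 ⟨c, hcc⟩ : ℕ) := (hF a.1 a.2 ⟨c, hcc⟩).symm
        _ = ((F b.1 b.2).1 ⟨c, hcc⟩ : ℕ) := by rw [hFab]
        _ = fS b.1 c := hF b.1 b.2 ⟨c, hcc⟩
    rw [recov a.1 a.2, recov b.1 b.2]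
    exact Finset.image_congr (fun c hc => heq c (by exact_mod_cast hc))
  calc Nat.choose (lam.card - M) (lamhat.card - M)
      = (Finset.powersetCard (k - M) I).card := by
        rw [Finset.card_powersetCard, hIcard]
    _ = Nat.card {S // S ∈ Finset.powersetCard (k - M) I} := by
        rw [Nat.card_eq_fintype_card, Fintype.card_coe]
    _ ≤ Nat.card {T : lam.cells ≃ Fin lam.card // IsSYT lam T} :=
        Nat.card_le_card_of_injective F' hF'inj
    _ = dimSYT lam := rfl
end
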